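/- Let (U₁(t))_{t∈ℝ} and (U₂(t))_{t∈ℝ} be strongly continuous unitary one-parameter groups on a complex Hilbert space 𝓗. Let Φ(t) (t ≥ 1) be a family of bounded self-adjoint operators with sup_{t≥1} ‖Φ(t)‖ < ∞, and let B_{1i}(t), B_{2i}(t) (i = 1,…,n) be families of bounded operators with t ↦ B_{1i}(t)ψ and t ↦ B_{2i}(t)ψ continuous for every ψ. Let 𝒟₁ ⊆ 𝓗 be a dense subspace. Assume: (a) for every ψ₁ ∈ 𝒟₁ and ψ₂ ∈ 𝓗 the function t ↦ ⟨U₂(t)ψ₂, Φ(t)U₁(t)ψ₁⟩ is differentiable on [1,∞) with |derivative| ≤ Σ_{i=1}^n ‖B_{2i}(t)U₂(t)ψ₂‖·‖B_{1i}(t)U₁(t)ψ₁‖ at each t ≥ 1; (b) ∫₁^∞ ‖B_{2i}(t)U₂(t)φ‖² dt ≤ ‖φ‖² for all φ ∈ 𝓗 and all i; (c) there is C > 0 with ∫₁^∞ ‖B_{1i}(t)U₁(t)φ‖² dt ≤ C‖φ‖² for all φ ∈ 𝒟₁ and all i. Then the strong limit s-lim_{t→∞} U₂(t)⁻¹ Φ(t)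 U₁(t) exists, i.e. U₂(t)*Φ(t)U₁(t)ψ converges in norm as t → ∞ for every ψ ∈ 𝓗. -/

import Mathlib

/-!
Cook's method with Kato smoothing. Write `F t = U₂(t)* Φ(t) U₁(t)`. For `ψ ∈ 𝒟₁` and `s ≤ b`
put `v = F b ψ - F s ψ`; then `‖v‖² = ⟪U₂ b v, Φ b (U₁ b ψ)⟫ - ⟪U₂ s v, Φ s (U₁ s ψ)⟫` is at most
the integral over `[s, b]` of the derivative bound (a). Cauchy–Schwarz in `t`, together with (b)
applied to `φ = v` itself, gives `‖v‖² ≤ ‖v‖ · Σᵢ (∫_s^∞ ‖B₁ᵢ(t) U₁(t) ψ‖² dt)^{1/2}`, and by (c)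
these tails tend to `0`. So `F t ψ` is Cauchy for `ψ ∈ 𝒟₁`, and the uniform bound on `‖F t‖`
carries this over to all of `𝓗`.
-/

open scoped InnerProductSpace ENNReal Topology
open MeasureTheory Filter Set

theorem IsCompact.continuousOn_clm_apply {𝕜 X E F : Type*} [NontriviallyNormedField 𝕜]
    [TopologicalSpace X] [NormedAddCommGroup E] [NormedSpace 𝕜 E] [CompleteSpace E]
    [NormedAddCommGroup F] [NormedSpace 𝕜 F] {K : Set X} (hK : IsCompact K)
    {A : X → E →L[𝕜] F} {x : X → E} (hA : ∀ ψ, ContinuousOn (fun t => A t ψ) K)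
    (hx : ContinuousOn x K) : ContinuousOn (fun t => A t (x t)) K := by
  obtain ⟨C, hC⟩ : ∃ C, ∀ t ∈ K, ‖A t‖ ≤ C := by
    obtain ⟨C, hC⟩ := banach_steinhaus (g := fun t : K => A t) fun ψ =>
      (hK.exists_bound_of_continuousOn (hA ψ)).imp fun _ h t => h t t.2
    exact ⟨C, fun t ht => hC ⟨t, ht⟩⟩
  intro t₀ ht₀
  rw [ContinuousWithinAt, tendsto_iff_norm_sub_tendsto_zero]
  have hlim : Tendsto (fun t => C * ‖x t - x t₀‖ + ‖A t (x t₀) - A t₀ (x t₀)‖) (𝓝[K] t₀) (𝓝 0) := by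
    simpa using ((tendsto_iff_norm_sub_tendsto_zero.1 (hx t₀ ht₀)).const_mul C).add
      (tendsto_iff_norm_sub_tendsto_zero.1 (hA (x t₀) t₀ ht₀))
  refine squeeze_zero' (.of_forall fun _ => norm_nonneg _)
    (eventually_mem_nhdsWithin.mono fun t ht => ?_) hlim
  calc ‖A t (x t) - A t₀ (x t₀)‖ = ‖A t (x t - x t₀) + (A t (x t₀) - A t₀ (x t₀))‖ := by
        rw [map_sub, sub_add_sub_cancel]
    _ ≤ C * ‖x t - x t₀‖ + ‖A t (x t₀) - A t₀ (x t₀)‖ :=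
        (norm_add_le _ _).trans (by gcongr; exact (A t).le_of_opNorm_le (hC t ht) _)

theorem norm_sub_le_integral_of_hasDerivWithinAt {E : Type*} [NormedAddCommGroup E]
    [NormedSpace ℝ E] {g : ℝ → E} {B : ℝ → ℝ} {a b : ℝ} (hab : a ≤ b)
    (hg : ∀ t ∈ Icc a b, ∃ d, HasDerivWithinAt g d (Icc a b) t ∧ ‖d‖ ≤ B t)
    (hB : IntervalIntegrable B volume a b) : ‖g b - g a‖ ≤ ∫ t in a..b, B t := by
  choose! d hd hdB using hg
  have hderiv : ∀ t ∈ Ioo a b, HasDerivAt g (d t) t := fun t ht =>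
    (hd t (Ioo_subset_Icc_self ht)).hasDerivAt (Icc_mem_nhds ht.1 ht.2)
  refine norm_sub_le_integral_of_norm_deriv_le_of_le hab
    (fun t ht => (hd t ht).continuousWithinAt)
    (fun t ht => (hderiv t ht).differentiableAt.differentiableWithinAt)
    (.of_forall fun t ht => ?_) hB
  rw [(hderiv t ht).deriv]
  exact hdB t (Ioo_subset_Icc_self ht)

theorem ENNReal.lintegral_mul_le_L2_mul_L2 {α : Type*} [MeasurableSpace α] (μ : Measure α)
    {f g : α → ℝ≥0∞} (hf : AEMeasurable f μ) (hg : AEMeasurable g μ) :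
    ∫⁻ a, f a * g a ∂μ ≤ (∫⁻ a, f a ^ 2 ∂μ) ^ (1 / 2 : ℝ) * (∫⁻ a, g a ^ 2 ∂μ) ^ (1 / 2 : ℝ) := by
  simpa only [ENNReal.rpow_two, Pi.mul_apply] using
    ENNReal.lintegral_mul_le_Lp_mul_Lq μ Real.HolderConjugate.two_two hf hg

theorem tendsto_setLIntegral_Ioi_atTop {μ : Measure ℝ} {f : ℝ → ℝ≥0∞} {a : ℝ}
    (hf : ∫⁻ t in Ioi a, f t ∂μ ≠ ∞) :
    Tendsto (fun s => ∫⁻ t in Ioi s, f t ∂μ) atTop (𝓝 0) := by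
  have hIoi : ⋂ s : ℝ, Ioi s = ∅ := iInter_eq_empty_iff.2 fun t => ⟨t, lt_irrefl t⟩
  have h := tendsto_measure_iInter_atTop (μ := μ.withDensity f)
    (fun s => measurableSet_Ioi.nullMeasurableSet) (fun _ _ h => Ioi_subset_Ioi h)
    ⟨a, by rwa [withDensity_apply _ measurableSet_Ioi]⟩
  rw [hIoi, measure_empty] at h
  simpa only [Function.comp_def, withDensity_apply _ measurableSet_Ioi] using h

theorem cauchySeq_apply_of_dense {ι 𝕜 E G : Type*} [SemilatticeSup ι] [Nonempty ι]
    [NontriviallyNormedField 𝕜] [NormedAddCommGroup E] [NormedSpace 𝕜 E]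
    [NormedAddCommGroup G] [NormedSpace 𝕜 G] {F : ι → E →L[𝕜] G} {M : ℝ}
    (hF : ∀ᶠ i in atTop, ‖F i‖ ≤ M) {D : Set E} (hD : Dense D)
    (hFD : ∀ ψ ∈ D, CauchySeq fun i => F i ψ) (ψ : E) : CauchySeq fun i => F i ψ := by
  rw [Metric.cauchySeq_iff]
  intro ε hε
  obtain ⟨y, hyD, hy⟩ : ∃ y ∈ D, M * dist ψ y < ε / 3 :=
    hD.exists_mem_open (isOpen_lt (continuous_const.mul (continuous_const.dist continuous_id))
      continuous_const) ⟨ψ, show M * dist ψ ψ < ε / 3 by simpa using hε⟩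
  obtain ⟨N₁, hN₁⟩ := Metric.cauchySeq_iff.1 (hFD y hyD) (ε / 3) (by positivity)
  obtain ⟨N₂, hN₂⟩ := eventually_atTop.1 hF
  have hclose : ∀ i, N₂ ≤ i → dist (F i ψ) (F i y) < ε / 3 := fun i hi => by
    rw [dist_eq_norm, ← map_sub]
    exact ((F i).le_of_opNorm_le (hN₂ i hi) _).trans_lt (by rwa [← dist_eq_norm])
  refine ⟨N₁ ⊔ N₂, fun m hm n hn => ?_⟩
  calc dist (F m ψ) (F n ψ) ≤ dist (F m ψ) (F m y) + dist (F m y) (F n y) + dist (F n y) (F n ψ) :=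
        dist_triangle4 _ _ _ _
    _ < ε / 3 + ε / 3 + ε / 3 := by
        gcongr
        · exact hclose m (le_sup_right.trans hm)
        · exact hN₁ m (le_sup_left.trans hm) n (le_sup_left.trans hn)
        · rw [dist_comm]; exact hclose n (le_sup_right.trans hn)
    _ = ε := by ring

theorem ofReal_integral_sum_mul_le {ι : Type*} [Fintype ι] {p q : ι → ℝ → ℝ} {a b : ℝ}
    (hab : a ≤ b) (hp : ∀ i, ContinuousOn (p i) (Icc a b)) (hq : ∀ i, ContinuousOn (q i) (Icc a b))
    (hp0 : ∀ i t, 0 ≤ p i t) (hq0 : ∀ i t, 0 ≤ q i t) :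
    ENNReal.ofReal (∫ t in a..b, ∑ i, p i t * q i t) ≤
      ∑ i, (∫⁻ t in Ioc a b, ENNReal.ofReal (p i t ^ 2)) ^ (1 / 2 : ℝ) *
        (∫⁻ t in Ioc a b, ENNReal.ofReal (q i t ^ 2)) ^ (1 / 2 : ℝ) := by
  have hmeas : ∀ {f : ℝ → ℝ}, ContinuousOn f (Icc a b) →
      AEMeasurable (fun t => ENNReal.ofReal (f t)) (volume.restrict (Ioc a b)) := fun hf =>
    ((hf.mono Ioc_subset_Icc_self).aemeasurable measurableSet_Ioc).ennreal_ofReal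
  have hint : IntegrableOn (fun t => ∑ i, p i t * q i t) (Ioc a b) :=
    ((continuousOn_finsetSum _ fun i _ => (hp i).mul (hq i)).integrableOn_Icc).mono_set
      Ioc_subset_Icc_self
  rw [intervalIntegral.integral_of_le hab, ofReal_integral_eq_lintegral_ofReal hint
    (.of_forall fun t => Finset.sum_nonneg fun i _ => mul_nonneg (hp0 i t) (hq0 i t))]
  calc ∫⁻ t in Ioc a b, ENNReal.ofReal (∑ i, p i t * q i t)
      = ∑ i, ∫⁻ t in Ioc a b, ENNReal.ofReal (p i t) * ENNReal.ofReal (q i t) := by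
        rw [← lintegral_finsetSum' (f := fun i t => ENNReal.ofReal (p i t) * ENNReal.ofReal (q i t))
          _ fun i _ => (hmeas (hp i)).mul (hmeas (hq i))]
        refine lintegral_congr fun t => ?_
        rw [ENNReal.ofReal_sum_of_nonneg fun i _ => mul_nonneg (hp0 i t) (hq0 i t)]
        exact Finset.sum_congr rfl fun i _ => ENNReal.ofReal_mul (hp0 i t)
    _ ≤ _ := by
        gcongr with i
        simpa only [ENNReal.ofReal_pow (hp0 i _), ENNReal.ofReal_pow (hq0 i _)] using
          ENNReal.lintegral_mul_le_L2_mul_L2 _ (hmeas (hp i)) (hmeas (hq i))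

theorem norm_adjoint_comp_comp_le {H : Type*} [NormedAddCommGroup H] [InnerProductSpace ℂ H]
    [CompleteSpace H] {U₁ U₂ Φ : H →L[ℂ] H} (hU₁ : ∀ ψ, ‖U₁ ψ‖ = ‖ψ‖)
    (hU₂ : ∀ ψ, ‖U₂ ψ‖ = ‖ψ‖) : ‖ContinuousLinearMap.adjoint U₂ ∘L Φ ∘L U₁‖ ≤ ‖Φ‖ := by
  have hle : ∀ {U : H →L[ℂ] H}, (∀ ψ, ‖U ψ‖ = ‖ψ‖) → ‖U‖ ≤ 1 := fun hU =>
    ContinuousLinearMap.opNorm_le_bound _ zero_le_one fun ψ => by rw [hU, one_mul]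
  calc ‖ContinuousLinearMap.adjoint U₂ ∘L Φ ∘L U₁‖
      ≤ ‖ContinuousLinearMap.adjoint U₂‖ * (‖Φ‖ * ‖U₁‖) :=
        (ContinuousLinearMap.opNorm_comp_le _ _).trans
          (by gcongr; exact ContinuousLinearMap.opNorm_comp_le _ _)
    _ ≤ 1 * (‖Φ‖ * 1) := by
        rw [ContinuousLinearMap.adjoint.norm_map]
        gcongr
        exacts [hle hU₂, hle hU₁]
    _ = ‖Φ‖ := by ring

section Cook

variable {ι H : Type*} [Fintype ι] [NormedAddCommGroup H] [InnerProductSpace ℂ H] [CompleteSpace H]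
  {U₁ U₂ Φ : ℝ → H →L[ℂ] H} {B₁ B₂ : ι → ℝ → H →L[ℂ] H} {a : ℝ} {ψ : H}

theorem edist_adjoint_apply_le_tail (hU₁ : Continuous fun t => U₁ t ψ)
    (hU₂ : ∀ φ, Continuous fun t => U₂ t φ)
    (hB₁ : ∀ i φ, ContinuousOn (fun t => B₁ i t φ) (Ici a))
    (hB₂ : ∀ i φ, ContinuousOn (fun t => B₂ i t φ) (Ici a))
    (hderiv : ∀ (φ : H) (t : ℝ), a ≤ t → ∃ d : ℂ,
      HasDerivWithinAt (fun s : ℝ => ⟪U₂ s φ, Φ s (U₁ s ψ)⟫_ℂ) d (Ici a) t ∧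
        ‖d‖ ≤ ∑ i, ‖B₂ i t (U₂ t φ)‖ * ‖B₁ i t (U₁ t ψ)‖)
    (hint₂ : ∀ i φ, ∫⁻ t in Ioi a, ENNReal.ofReal (‖B₂ i t (U₂ t φ)‖ ^ 2) ≤
      ENNReal.ofReal (‖φ‖ ^ 2))
    {s b : ℝ} (has : a ≤ s) (hsb : s ≤ b) :
    edist (ContinuousLinearMap.adjoint (U₂ b) (Φ b (U₁ b ψ)))
        (ContinuousLinearMap.adjoint (U₂ s) (Φ s (U₁ s ψ))) ≤
      ∑ i, (∫⁻ t in Ioi s, ENNReal.ofReal (‖B₁ i t (U₁ t ψ)‖ ^ 2)) ^ (1 / 2 : ℝ) := by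
  set v := ContinuousLinearMap.adjoint (U₂ b) (Φ b (U₁ b ψ)) -
    ContinuousLinearMap.adjoint (U₂ s) (Φ s (U₁ s ψ))
  set p : ι → ℝ → ℝ := fun i t => ‖B₂ i t (U₂ t v)‖
  set q : ι → ℝ → ℝ := fun i t => ‖B₁ i t (U₁ t ψ)‖
  have hsub : Icc s b ⊆ Ici a := fun t ht => has.trans ht.1
  have hp : ∀ i, ContinuousOn (p i) (Icc s b) := fun i =>
    (isCompact_Icc.continuousOn_clm_apply (fun φ => (hB₂ i φ).mono hsub)
      (hU₂ v).continuousOn).norm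
  have hq : ∀ i, ContinuousOn (q i) (Icc s b) := fun i =>
    (isCompact_Icc.continuousOn_clm_apply (fun φ => (hB₁ i φ).mono hsub) hU₁.continuousOn).norm
  have hftc : ‖v‖ ^ 2 ≤ ∫ t in s..b, ∑ i, p i t * q i t := by
    have hG : ⟪U₂ b v, Φ b (U₁ b ψ)⟫_ℂ - ⟪U₂ s v, Φ s (U₁ s ψ)⟫_ℂ = ((‖v‖ ^ 2 : ℝ) : ℂ) := by
      rw [← ContinuousLinearMap.adjoint_inner_right, ← ContinuousLinearMap.adjoint_inner_right,
        ← inner_sub_right, inner_self_eq_norm_sq_to_K]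
      push_cast; rfl
    calc ‖v‖ ^ 2 = ‖⟪U₂ b v, Φ b (U₁ b ψ)⟫_ℂ - ⟪U₂ s v, Φ s (U₁ s ψ)⟫_ℂ‖ := by
          rw [hG, Complex.norm_real, Real.norm_of_nonneg (by positivity)]
      _ ≤ _ := norm_sub_le_integral_of_hasDerivWithinAt hsb
          (fun t ht => (hderiv v t (hsub ht)).imp fun _ hd => ⟨hd.1.mono hsub, hd.2⟩)
          (ContinuousOn.intervalIntegrable (by
            rw [uIcc_of_le hsb]; exact continuousOn_finsetSum _ fun i _ => (hp i).mul (hq i)))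
  have hp2 : ∀ i, ∫⁻ t in Ioc s b, ENNReal.ofReal (p i t ^ 2) ≤ ENNReal.ofReal (‖v‖ ^ 2) :=
    fun i => (lintegral_mono_set fun t ht => has.trans_lt ht.1).trans (hint₂ i v)
  have hsqrt : ENNReal.ofReal (‖v‖ ^ 2) ^ (1 / 2 : ℝ) = ‖v‖ₑ := by
    rw [ENNReal.ofReal_pow (norm_nonneg v), ofReal_norm, one_div]
    exact_mod_cast ENNReal.pow_rpow_inv_natCast two_ne_zero ‖v‖ₑ
  have key : ‖v‖ₑ * ‖v‖ₑ ≤ ‖v‖ₑ * ∑ i, (∫⁻ t in Ioi s, ENNReal.ofReal (q i t ^ 2)) ^ (1 / 2 : ℝ) :=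
    calc ‖v‖ₑ * ‖v‖ₑ = ENNReal.ofReal (‖v‖ ^ 2) := by
          rw [ENNReal.ofReal_pow (norm_nonneg v), ofReal_norm, sq]
      _ ≤ ENNReal.ofReal (∫ t in s..b, ∑ i, p i t * q i t) := ENNReal.ofReal_le_ofReal hftc
      _ ≤ _ := ofReal_integral_sum_mul_le hsb hp hq (fun _ _ => norm_nonneg _)
          (fun _ _ => norm_nonneg _)
      _ ≤ ∑ i, ENNReal.ofReal (‖v‖ ^ 2) ^ (1 / 2 : ℝ) *
          (∫⁻ t in Ioi s, ENNReal.ofReal (q i t ^ 2)) ^ (1 / 2 : ℝ) := by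
          gcongr with i
          exacts [hp2 i, Ioc_subset_Ioi_self]
      _ = _ := by rw [hsqrt, Finset.mul_sum]
  rw [edist_eq_enorm_sub]
  rcases eq_or_ne ‖v‖ₑ 0 with hv | hv
  · rw [hv]; exact zero_le
  · exact (ENNReal.mul_le_mul_iff_right hv enorm_ne_top).1 key

theorem cauchySeq_adjoint_apply (hU₁ : Continuous fun t => U₁ t ψ)
    (hU₂ : ∀ φ, Continuous fun t => U₂ t φ)
    (hB₁ : ∀ i φ, ContinuousOn (fun t => B₁ i t φ) (Ici a))
    (hB₂ : ∀ i φ, ContinuousOn (fun t => B₂ i t φ) (Ici a))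
    (hderiv : ∀ (φ : H) (t : ℝ), a ≤ t → ∃ d : ℂ,
      HasDerivWithinAt (fun s : ℝ => ⟪U₂ s φ, Φ s (U₁ s ψ)⟫_ℂ) d (Ici a) t ∧
        ‖d‖ ≤ ∑ i, ‖B₂ i t (U₂ t φ)‖ * ‖B₁ i t (U₁ t ψ)‖)
    (hint₂ : ∀ i φ, ∫⁻ t in Ioi a, ENNReal.ofReal (‖B₂ i t (U₂ t φ)‖ ^ 2) ≤
      ENNReal.ofReal (‖φ‖ ^ 2))
    (hint₁ : ∀ i, ∫⁻ t in Ioi a, ENNReal.ofReal (‖B₁ i t (U₁ t ψ)‖ ^ 2) ≠ ∞) :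
    CauchySeq fun t => ContinuousLinearMap.adjoint (U₂ t) (Φ t (U₁ t ψ)) := by
  have htail : Tendsto (fun s => ∑ i,
      (∫⁻ t in Ioi s, ENNReal.ofReal (‖B₁ i t (U₁ t ψ)‖ ^ 2)) ^ (1 / 2 : ℝ)) atTop (𝓝 0) := by
    have h0 : (0 : ℝ≥0∞) = ∑ _i : ι, (0 : ℝ≥0∞) ^ (1 / 2 : ℝ) := by simp
    rw [h0]
    exact tendsto_finsetSum _ fun i _ =>
      (ENNReal.continuous_rpow_const.tendsto 0).comp (tendsto_setLIntegral_Ioi_atTop (hint₁ i))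
  rw [EMetric.cauchySeq_iff']
  intro ε hε
  obtain ⟨N, haN, hN⟩ := ((eventually_ge_atTop a).and (htail.eventually (gt_mem_nhds hε))).exists
  exact ⟨N, fun t ht =>
    (edist_adjoint_apply_le_tail hU₁ hU₂ hB₁ hB₂ hderiv hint₂ haN ht).trans_lt hN⟩

end Cook

theorem stmt_3_general {H : Type*} [NormedAddCommGroup H] [InnerProductSpace ℂ H] [CompleteSpace H]
    (U₁ U₂ : ℝ → H →L[ℂ] H)
    (hU₁iso : ∀ (t : ℝ) (ψ : H), ‖U₁ t ψ‖ = ‖ψ‖)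
    (hU₁cont : ∀ ψ : H, Continuous fun t => U₁ t ψ)
    (hU₂iso : ∀ (t : ℝ) (ψ : H), ‖U₂ t ψ‖ = ‖ψ‖)
    (hU₂cont : ∀ ψ : H, Continuous fun t => U₂ t ψ)
    (n : ℕ) (Φ : ℝ → H →L[ℂ] H) (B₁ B₂ : Fin n → ℝ → H →L[ℂ] H)
    (hΦbdd : ∃ M : ℝ, ∀ t : ℝ, 1 ≤ t → ‖Φ t‖ ≤ M)
    (hB₁cont : ∀ (i : Fin n) (ψ : H), ContinuousOn (fun t => B₁ i t ψ) (Set.Ici 1))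
    (hB₂cont : ∀ (i : Fin n) (ψ : H), ContinuousOn (fun t => B₂ i t ψ) (Set.Ici 1))
    (D₁ : Submodule ℂ H) (hD₁ : Dense (D₁ : Set H))
    (hderiv : ∀ ψ₁ ∈ D₁, ∀ (ψ₂ : H) (t : ℝ), 1 ≤ t → ∃ d : ℂ,
      HasDerivWithinAt (fun s : ℝ => ⟪U₂ s ψ₂, Φ s (U₁ s ψ₁)⟫_ℂ) d (Set.Ici 1) t ∧
        ‖d‖ ≤ ∑ i : Fin n, ‖B₂ i t (U₂ t ψ₂)‖ * ‖B₁ i t (U₁ t ψ₁)‖)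
    (hint₂ : ∀ (i : Fin n) (φ : H),
      ∫⁻ t in Set.Ioi (1 : ℝ), ENNReal.ofReal (‖B₂ i t (U₂ t φ)‖ ^ 2) ≤
        ENNReal.ofReal (‖φ‖ ^ 2))
    (C : ℝ)
    (hint₁ : ∀ (i : Fin n), ∀ φ ∈ D₁,
      ∫⁻ t in Set.Ioi (1 : ℝ), ENNReal.ofReal (‖B₁ i t (U₁ t φ)‖ ^ 2) ≤
        ENNReal.ofReal (C * ‖φ‖ ^ 2)) :
    ∀ ψ : H, ∃ w : H,
      Filter.Tendsto (fun t => ContinuousLinearMap.adjoint (U₂ t) (Φ t (U₁ t ψ)))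
        Filter.atTop (nhds w) := by
  intro ψ
  obtain ⟨M, hM⟩ := hΦbdd
  let F : ℝ → H →L[ℂ] H := fun t => ContinuousLinearMap.adjoint (U₂ t) ∘L Φ t ∘L U₁ t
  have hF : ∀ᶠ t in atTop, ‖F t‖ ≤ M := (eventually_ge_atTop 1).mono fun t ht =>
    (norm_adjoint_comp_comp_le (hU₁iso t) (hU₂iso t)).trans (hM t ht)
  have hFD : ∀ φ ∈ (D₁ : Set H), CauchySeq fun t => F t φ := fun φ hφ =>
    cauchySeq_adjoint_apply (hU₁cont φ) hU₂cont hB₁cont hB₂cont (hderiv φ hφ) hint₂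
      fun i => ne_top_of_le_ne_top ENNReal.ofReal_ne_top (hint₁ i φ hφ)
  exact cauchySeq_tendsto_of_complete (cauchySeq_apply_of_dense hF hD₁ hFD ψ)

/-- **Lemma A.2 (Kato's version of Cook's method).** Let `(U₁(t))`, `(U₂(t))` be strongly
continuous unitary one-parameter groups, `Φ(t)` (for `t ≥ 1`) a uniformly bounded family
of bounded self-adjoint operators, `B_{1i}(t), B_{2i}(t)` strongly continuous families of
bounded operators and `𝒟₁ ⊆ 𝓗` a dense subspace. Assume
(a) for `ψ₁ ∈ 𝒟₁`, `ψ₂ ∈ 𝓗`, the function `t ↦ ⟨U₂(t)ψ₂, Φ(t)U₁(t)ψ₁⟩` is differentiable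
on `[1,∞)` with `|derivative| ≤ Σᵢ ‖B_{2i}(t)U₂(t)ψ₂‖ ‖B_{1i}(t)U₁(t)ψ₁‖`;
(b) `∫₁^∞ ‖B_{2i}(t)U₂(t)φ‖² dt ≤ ‖φ‖²` for all `φ ∈ 𝓗`;
(c) `∫₁^∞ ‖B_{1i}(t)U₁(t)φ‖² dt ≤ C‖φ‖²` for all `φ ∈ 𝒟₁`.
Then the strong limit `s-lim_{t→∞} U₂(t)* Φ(t) U₁(t)` exists. -/
theorem stmt_3 {H : Type*} [NormedAddCommGroup H] [InnerProductSpace ℂ H] [CompleteSpace H]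
    (U₁ U₂ : ℝ → H →L[ℂ] H)
    (hU₁0 : U₁ 0 = 1) (hU₁add : ∀ s t : ℝ, U₁ (s + t) = (U₁ s).comp (U₁ t))
    (hU₁iso : ∀ (t : ℝ) (ψ : H), ‖U₁ t ψ‖ = ‖ψ‖)
    (hU₁cont : ∀ ψ : H, Continuous fun t => U₁ t ψ)
    (hU₂0 : U₂ 0 = 1) (hU₂add : ∀ s t : ℝ, U₂ (s + t) = (U₂ s).comp (U₂ t))
    (hU₂iso : ∀ (t : ℝ) (ψ : H), ‖U₂ t ψ‖ = ‖ψ‖)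
    (hU₂cont : ∀ ψ : H, Continuous fun t => U₂ t ψ)
    (n : ℕ) (Φ : ℝ → H →L[ℂ] H) (B₁ B₂ : Fin n → ℝ → H →L[ℂ] H)
    (hΦsa : ∀ t : ℝ, 1 ≤ t → IsSelfAdjoint (Φ t))
    (hΦbdd : ∃ M : ℝ, ∀ t : ℝ, 1 ≤ t → ‖Φ t‖ ≤ M)
    (hB₁cont : ∀ (i : Fin n) (ψ : H), ContinuousOn (fun t => B₁ i t ψ) (Set.Ici 1))
    (hB₂cont : ∀ (i : Fin n) (ψ : H), ContinuousOn (fun t => B₂ i t ψ) (Set.Ici 1))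
    (D₁ : Submodule ℂ H) (hD₁ : Dense (D₁ : Set H))
    (hderiv : ∀ ψ₁ ∈ D₁, ∀ (ψ₂ : H) (t : ℝ), 1 ≤ t → ∃ d : ℂ,
      HasDerivWithinAt (fun s : ℝ => ⟪U₂ s ψ₂, Φ s (U₁ s ψ₁)⟫_ℂ) d (Set.Ici 1) t ∧
        ‖d‖ ≤ ∑ i : Fin n, ‖B₂ i t (U₂ t ψ₂)‖ * ‖B₁ i t (U₁ t ψ₁)‖)
    (hint₂ : ∀ (i : Fin n) (φ : H),
      ∫⁻ t in Set.Ioi (1 : ℝ), ENNReal.ofReal (‖B₂ i t (U₂ t φ)‖ ^ 2) ≤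
        ENNReal.ofReal (‖φ‖ ^ 2))
    (C : ℝ) (hC : 0 < C)
    (hint₁ : ∀ (i : Fin n), ∀ φ ∈ D₁,
      ∫⁻ t in Set.Ioi (1 : ℝ), ENNReal.ofReal (‖B₁ i t (U₁ t φ)‖ ^ 2) ≤
        ENNReal.ofReal (C * ‖φ‖ ^ 2)) :
    ∀ ψ : H, ∃ w : H,
      Filter.Tendsto (fun t => ContinuousLinearMap.adjoint (U₂ t) (Φ t (U₁ t ψ)))
        Filter.atTop (nhds w) :=
  stmt_3_general U₁ U₂ hU₁iso hU₁cont hU₂iso hU₂cont n Φ B₁ B₂ hΦbdd hB₁cont hB₂cont D₁ hD₁ hderiv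
    hint₂ C hint₁
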